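/- Assume p_{i+} > 0 for every row i. Let t be an integer with 1 ≤ t < c and S_t(p_{+·}) ≠ 1. Then λ^{K(t)}_{Y|X} = 1 if and only if p_{i+} = S_t(p_{i·}) for every row i = 1, …, r (i.e., each row of the table contains at most t nonzero cell probabilities). -/

import Mathlib

/-! Since `0 ≤ S_t(p_{i·}) ≤ p_{i+}`, each term `S_t(p_{i·})² / p_{i+}` is at most `p_{i+}`, so the
sum under the square root is at most `∑ p_{i+} = 1`, with equality exactly when every term is
extremal, i.e. `S_t(p_{i·}) = p_{i+}`. As the denominator `1 - S_t(p_{+·})` is nonzero,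
`λ^{K(t)} = 1` says precisely that this square root is `1`. -/

/-- `Smax t q` : the maximum, over subsets `T` of the index type with `T.card = t`,
of `∑ j ∈ T, q j` (i.e. the sum of the `t` largest entries of `q`). -/
noncomputable def Smax {n : ℕ} (t : ℕ) (q : Fin n → ℝ) : ℝ :=
  sSup ((fun T : Finset (Fin n) => ∑ j ∈ T, q j) '' {T : Finset (Fin n) | T.card = t})

/-- Row marginals `p_{i+}`. -/
noncomputable def rowMarg {r c : ℕ} (p : Fin r → Fin c → ℝ) : Fin r → ℝ :=
  fun i => ∑ j, p i j

/-- Column marginals `p_{+j}`. -/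
noncomputable def colMarg {r c : ℕ} (p : Fin r → Fin c → ℝ) : Fin c → ℝ :=
  fun j => ∑ i, p i j

/-- The measure `λ^{(t)}_{Y|X}` based on multi-categorical proportional reduction in error. -/
noncomputable def lambdaT {r c : ℕ} (t : ℕ) (p : Fin r → Fin c → ℝ) : ℝ :=
  (∑ i, Smax t (p i) - Smax t (colMarg p)) / (1 - Smax t (colMarg p))

/-- The alternative measure `λ^{K(t)}_{Y|X}`. -/
noncomputable def lambdaKT {r c : ℕ} (t : ℕ) (p : Fin r → Fin c → ℝ) : ℝ :=
  (Real.sqrt (∑ i, (Smax t (p i)) ^ 2 / rowMarg p i) - Smax t (colMarg p)) /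
    (1 - Smax t (colMarg p))

open Finset

section Smax

variable {n : ℕ} (t : ℕ) {q : Fin n → ℝ}

theorem Smax_nonneg (hq : ∀ j, 0 ≤ q j) : 0 ≤ Smax t q :=
  Real.sSup_nonneg <| by
    rintro _ ⟨T, -, rfl⟩
    exact sum_nonneg fun j _ => hq j

theorem Smax_le_sum (hq : ∀ j, 0 ≤ q j) : Smax t q ≤ ∑ j, q j :=
  Real.sSup_le
    (by
      rintro _ ⟨T, -, rfl⟩
      exact sum_le_sum_of_subset_of_nonneg (subset_univ T) fun j _ _ => hq j)
    (sum_nonneg fun j _ => hq j)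

end Smax

theorem sq_div_le_self {a b : ℝ} (ha : 0 ≤ a) (hab : a ≤ b) (hb : 0 < b) : a ^ 2 / b ≤ b := by
  rw [div_le_iff₀ hb]
  nlinarith

theorem sq_div_eq_self_iff {a b : ℝ} (ha : 0 ≤ a) (hb : 0 < b) : a ^ 2 / b = b ↔ a = b := by
  rw [div_eq_iff hb.ne', ← sq, sq_eq_sq₀ ha hb.le]

theorem sum_sq_div_eq_sum_iff {ι : Type*} {s : Finset ι} {a b : ι → ℝ}
    (ha : ∀ i ∈ s, 0 ≤ a i) (hab : ∀ i ∈ s, a i ≤ b i) (hb : ∀ i ∈ s, 0 < b i) :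
    ∑ i ∈ s, a i ^ 2 / b i = ∑ i ∈ s, b i ↔ ∀ i ∈ s, a i = b i := by
  rw [sum_eq_sum_iff_of_le fun i hi => sq_div_le_self (ha i hi) (hab i hi) (hb i hi)]
  exact forall₂_congr fun i hi => sq_div_eq_self_iff (ha i hi) (hb i hi)

theorem lambdaKT_eq_one_iff_sqrt_eq_one {r c : ℕ} (t : ℕ) (p : Fin r → Fin c → ℝ)
    (hS : Smax t (colMarg p) ≠ 1) :
    lambdaKT t p = 1 ↔ Real.sqrt (∑ i, Smax t (p i) ^ 2 / rowMarg p i) = 1 := by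
  rw [lambdaKT, div_eq_one_iff_eq (sub_ne_zero.mpr hS.symm), sub_left_inj]

theorem lambdaKT_eq_one_iff_general
    (r c : ℕ)
    (p : Fin r → Fin c → ℝ) (hp : ∀ i j, 0 ≤ p i j)
    (hsum : ∑ i, ∑ j, p i j = 1)
    (hpos : ∀ i, 0 < rowMarg p i)
    (t : ℕ)
    (hS : Smax t (colMarg p) ≠ 1) :
    lambdaKT t p = 1 ↔ ∀ i, rowMarg p i = Smax t (p i) := by
  have hrowsum : ∑ i, rowMarg p i = 1 := hsum
  rw [lambdaKT_eq_one_iff_sqrt_eq_one t p hS, Real.sqrt_eq_one, ← hrowsum,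
    sum_sq_div_eq_sum_iff (b := rowMarg p) (fun i _ => Smax_nonneg t (hp i))
      (fun i _ => Smax_le_sum t (hp i)) (fun i _ => hpos i)]
  simp only [mem_univ, true_implies, eq_comm]

/-- `λ^{K(t)}_{Y|X} = 1` iff `p_{i+} = S_t(p_{i·})` for every row `i`. -/
theorem lambdaKT_eq_one_iff
    (r c : ℕ) (hr : 2 ≤ r) (hc : 2 ≤ c)
    (p : Fin r → Fin c → ℝ) (hp : ∀ i j, 0 ≤ p i j)
    (hsum : ∑ i, ∑ j, p i j = 1)
    (hpos : ∀ i, 0 < rowMarg p i)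
    (t : ℕ) (ht1 : 1 ≤ t) (htc : t < c)
    (hS : Smax t (colMarg p) ≠ 1) :
    lambdaKT t p = 1 ↔ ∀ i, rowMarg p i = Smax t (p i) :=
  lambdaKT_eq_one_iff_general r c p hp hsum hpos t hS
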